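/- arXiv:2010.10181 — 2 statements merged into one kernel-verified Lean document; each statement's English description precedes it below -/
import Mathlib

section
/- (Lemma 1, risk decomposition under symmetric loss) Let ρ' = α ρ_E + (1-α) ρ_N and ρ_π = κ ρ_E + (1-κ) ρ_N be mixtures of probability measures ρ_E, ρ_N with α, κ ∈ [0,1], and let ρ_π^λ = λ ρ_N + (1-λ) ρ_π for λ ∈ [0,1]. If ℓ is a symmetric loss with ℓ(z) + ℓ(-z) = c for all z, then for any bounded measurable classifier g, R(g; ρ', ρ_π^λ, ℓ) = (α - κ(1-λ)) · R(g; ρ_E, ρ_N, ℓ) + c(1 - α + κ(1-λ))/2, where R(g; μ, ν, ℓ) = (1/2)E_μ[ℓ(g)] + (1/2)E_ν[ℓ(-g)]. -/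
/-!
For a symmetric loss, `∫ ℓ ∘ (-g) dμ = c - ∫ ℓ ∘ g dμ` on every probability measure, and
integrals are affine in the mixture weights. Hence both risks are affine functions of
`∫ ℓ ∘ g dρE` and `∫ ℓ ∘ g dρN`, and the identity is a comparison of coefficients.
-/

open MeasureTheory ENNReal

noncomputable def balancedRisk {X : Type*} [MeasurableSpace X]
    (μ ν : Measure X) (ℓ : ℝ → ℝ) (g : X → ℝ) : ℝ :=
  (1/2) * ∫ x, ℓ (g x) ∂μ + (1/2) * ∫ x, ℓ (-g x) ∂ν

theorem comp_neg_eq_const_sub_of_add_eq {X : Type*} {ℓ : ℝ → ℝ} {c : ℝ} {g : X → ℝ}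
    (hsym : ∀ z, ℓ z + ℓ (-z) = c) : (fun x => ℓ (-g x)) = fun x => c - ℓ (g x) :=
  funext fun x => eq_sub_of_add_eq' (hsym (g x))

namespace MeasureTheory

variable {X : Type*} [MeasurableSpace X]

theorem Integrable.ofReal_smul_add_ofReal_smul_measure {E : Type*} [NormedAddCommGroup E]
    {μ ν : Measure X} {f : X → E} (hμ : Integrable f μ) (hν : Integrable f ν) (a b : ℝ) :
    Integrable f (ENNReal.ofReal a • μ + ENNReal.ofReal b • ν) :=
  (hμ.smul_measure ofReal_ne_top).add_measure (hν.smul_measure ofReal_ne_top)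

theorem integral_ofReal_smul_add_ofReal_smul_measure {E : Type*} [NormedAddCommGroup E]
    [NormedSpace ℝ E] {μ ν : Measure X} {f : X → E} (hμ : Integrable f μ) (hν : Integrable f ν)
    {a b : ℝ} (ha : 0 ≤ a) (hb : 0 ≤ b) :
    ∫ x, f x ∂(ENNReal.ofReal a • μ + ENNReal.ofReal b • ν) = a • ∫ x, f x ∂μ + b • ∫ x, f x ∂ν := by
  rw [integral_add_measure (hμ.smul_measure ofReal_ne_top) (hν.smul_measure ofReal_ne_top),
    integral_smul_measure, integral_smul_measure, toReal_ofReal ha, toReal_ofReal hb]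

section SymmetricLoss

variable {μ : Measure X} {ℓ : ℝ → ℝ} {c : ℝ} {g : X → ℝ}

theorem Integrable.comp_neg_of_add_eq [IsFiniteMeasure μ] (hsym : ∀ z, ℓ z + ℓ (-z) = c)
    (h : Integrable (fun x => ℓ (g x)) μ) : Integrable (fun x => ℓ (-g x)) μ := by
  rw [comp_neg_eq_const_sub_of_add_eq hsym]
  exact (integrable_const c).sub h

theorem integral_comp_neg_of_add_eq [IsProbabilityMeasure μ] (hsym : ∀ z, ℓ z + ℓ (-z) = c)
    (h : Integrable (fun x => ℓ (g x)) μ) :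
    ∫ x, ℓ (-g x) ∂μ = c - ∫ x, ℓ (g x) ∂μ := by
  rw [comp_neg_eq_const_sub_of_add_eq hsym, integral_sub (integrable_const c) h, integral_const,
    probReal_univ, one_smul]

end SymmetricLoss

end MeasureTheory

theorem risk_decomposition_symmetric_loss_general {X : Type*} [MeasurableSpace X]
    (ρE ρN : Measure X) [IsProbabilityMeasure ρE] [IsProbabilityMeasure ρN]
    (α κ lam : ℝ) (hα : α ∈ Set.Icc (0:ℝ) 1) (hκ : κ ∈ Set.Icc (0:ℝ) 1)
    (hlam : lam ∈ Set.Icc (0:ℝ) 1)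
    (ℓ : ℝ → ℝ) (c : ℝ) (hsym : ∀ z : ℝ, ℓ z + ℓ (-z) = c)
    (g : X → ℝ)
    (h1 : Integrable (fun x => ℓ (g x)) ρE)
    (h2 : Integrable (fun x => ℓ (g x)) ρN)
    (ρ' ρπ ρπl : Measure X)
    (hρ' : ρ' = ENNReal.ofReal α • ρE + ENNReal.ofReal (1 - α) • ρN)
    (hρπ : ρπ = ENNReal.ofReal κ • ρE + ENNReal.ofReal (1 - κ) • ρN)
    (hρπl : ρπl = ENNReal.ofReal lam • ρN + ENNReal.ofReal (1 - lam) • ρπ) :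
    balancedRisk ρ' ρπl ℓ g
      = (α - κ * (1 - lam)) * balancedRisk ρE ρN ℓ g
        + c * (1 - α + κ * (1 - lam)) / 2 := by
  obtain ⟨hα0, hα1⟩ := hα
  obtain ⟨hκ0, hκ1⟩ := hκ
  obtain ⟨hlam0, hlam1⟩ := hlam
  have h3 := h1.comp_neg_of_add_eq hsym
  have h4 := h2.comp_neg_of_add_eq hsym
  have h3π : Integrable (fun x => ℓ (-g x)) ρπ :=
    hρπ ▸ h3.ofReal_smul_add_ofReal_smul_measure h4 κ (1 - κ)
  have I1 : ∫ x, ℓ (g x) ∂ρ' = α * ∫ x, ℓ (g x) ∂ρE + (1 - α) * ∫ x, ℓ (g x) ∂ρN :=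
    hρ' ▸ integral_ofReal_smul_add_ofReal_smul_measure h1 h2 hα0 (sub_nonneg.2 hα1)
  have I2 : ∫ x, ℓ (-g x) ∂ρπ = κ * ∫ x, ℓ (-g x) ∂ρE + (1 - κ) * ∫ x, ℓ (-g x) ∂ρN :=
    hρπ ▸ integral_ofReal_smul_add_ofReal_smul_measure h3 h4 hκ0 (sub_nonneg.2 hκ1)
  have I3 : ∫ x, ℓ (-g x) ∂ρπl = lam * ∫ x, ℓ (-g x) ∂ρN + (1 - lam) * ∫ x, ℓ (-g x) ∂ρπ :=
    hρπl ▸ integral_ofReal_smul_add_ofReal_smul_measure h4 h3π hlam0 (sub_nonneg.2 hlam1)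
  simp only [balancedRisk, I1, I3, I2, integral_comp_neg_of_add_eq hsym h1,
    integral_comp_neg_of_add_eq hsym h2]
  ring

theorem risk_decomposition_symmetric_loss {X : Type*} [MeasurableSpace X]
    (ρE ρN : Measure X) [IsProbabilityMeasure ρE] [IsProbabilityMeasure ρN]
    (α κ lam : ℝ) (hα : α ∈ Set.Icc (0:ℝ) 1) (hκ : κ ∈ Set.Icc (0:ℝ) 1)
    (hlam : lam ∈ Set.Icc (0:ℝ) 1)
    (ℓ : ℝ → ℝ) (c : ℝ) (hsym : ∀ z : ℝ, ℓ z + ℓ (-z) = c)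
    (g : X → ℝ) (hg : Measurable g) (C : ℝ) (hbd : ∀ x, |g x| ≤ C)
    (h1 : Integrable (fun x => ℓ (g x)) ρE)
    (h2 : Integrable (fun x => ℓ (g x)) ρN)
    (h3 : Integrable (fun x => ℓ (-g x)) ρE)
    (h4 : Integrable (fun x => ℓ (-g x)) ρN)
    (ρ' ρπ ρπl : Measure X)
    (hρ' : ρ' = ENNReal.ofReal α • ρE + ENNReal.ofReal (1 - α) • ρN)
    (hρπ : ρπ = ENNReal.ofReal κ • ρE + ENNReal.ofReal (1 - κ) • ρN)
    (hρπl : ρπl = ENNReal.ofReal lam • ρN + ENNReal.ofReal (1 - lam) • ρπ) :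
    balancedRisk ρ' ρπl ℓ g
      = (α - κ * (1 - lam)) * balancedRisk ρE ρN ℓ g
        + c * (1 - α + κ * (1 - lam)) / 2 :=
  risk_decomposition_symmetric_loss_general ρE ρN α κ lam hα hκ hlam ℓ c hsym g h1 h2 ρ' ρπ ρπl hρ'
    hρπ hρπl
end

section
/- Under the setting of Lemma 1, if α - κ(1-λ) > 0, then a classifier g* minimizes R(g; ρ', ρ_π^λ, ℓ_sym) over a class of classifiers G if and only if g* minimizes R(g; ρ_E, ρ_N, ℓ_sym) over G. -/
open MeasureTheory ENNReal

lemma combo_integral {X : Type*} [MeasurableSpace X] (μ ν : Measure X)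
    (r s : ℝ) (hr : 0 ≤ r) (hs : 0 ≤ s) (f : X → ℝ)
    (hf : Integrable f μ) (hg : Integrable f ν) :
    ∫ x, f x ∂(ENNReal.ofReal r • μ + ENNReal.ofReal s • ν)
      = r * ∫ x, f x ∂μ + s * ∫ x, f x ∂ν := by
  rw [integral_add_measure (hf.smul_measure ofReal_ne_top)
      (hg.smul_measure ofReal_ne_top), integral_smul_measure,
      integral_smul_measure, toReal_ofReal hr, toReal_ofReal hs,
      smul_eq_mul, smul_eq_mul]

lemma flip_integral {X : Type*} [MeasurableSpace X] (μ : Measure X)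
    [IsProbabilityMeasure μ] (ℓ : ℝ → ℝ) (c : ℝ)
    (hsym : ∀ z : ℝ, ℓ z + ℓ (-z) = c) (g : X → ℝ)
    (hg : Integrable (fun x => ℓ (g x)) μ) :
    ∫ x, ℓ (-g x) ∂μ = c - ∫ x, ℓ (g x) ∂μ := by
  have : (fun x => ℓ (-g x)) = fun x => c - ℓ (g x) := by
    funext x; have := hsym (g x); linarith
  rw [this, integral_sub (integrable_const c) hg, integral_const]
  simp

theorem minimizer_equivalence {X : Type*} [MeasurableSpace X]
    (ρE ρN : Measure X) [IsProbabilityMeasure ρE] [IsProbabilityMeasure ρN]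
    (α κ lam : ℝ) (hα : α ∈ Set.Icc (0:ℝ) 1) (hκ : κ ∈ Set.Icc (0:ℝ) 1)
    (hlam : lam ∈ Set.Icc (0:ℝ) 1)
    (hpos : α - κ * (1 - lam) > 0)
    (ℓ : ℝ → ℝ) (c : ℝ) (hsym : ∀ z : ℝ, ℓ z + ℓ (-z) = c)
    (G : Set (X → ℝ))
    (hGmeas : ∀ g ∈ G, Measurable g)
    (hGbd : ∀ g ∈ G, ∃ C : ℝ, ∀ x, |g x| ≤ C)
    (hInt : ∀ g ∈ G, Integrable (fun x => ℓ (g x)) ρE ∧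
      Integrable (fun x => ℓ (g x)) ρN ∧
      Integrable (fun x => ℓ (-g x)) ρE ∧
      Integrable (fun x => ℓ (-g x)) ρN)
    (ρ' ρπ ρπl : Measure X)
    (hρ' : ρ' = ENNReal.ofReal α • ρE + ENNReal.ofReal (1 - α) • ρN)
    (hρπ : ρπ = ENNReal.ofReal κ • ρE + ENNReal.ofReal (1 - κ) • ρN)
    (hρπl : ρπl = ENNReal.ofReal lam • ρN + ENNReal.ofReal (1 - lam) • ρπ)
    (gstar : X → ℝ) (hgstar : gstar ∈ G) :
    (∀ g ∈ G, balancedRisk ρ' ρπl ℓ gstar ≤ balancedRisk ρ' ρπl ℓ g) ↔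
    (∀ g ∈ G, balancedRisk ρE ρN ℓ gstar ≤ balancedRisk ρE ρN ℓ g) := by
  obtain ⟨hα0, hα1⟩ := hα
  obtain ⟨hκ0, hκ1⟩ := hκ
  obtain ⟨hl0, hl1⟩ := hlam
  set t : ℝ := α - κ * (1 - lam) with ht
  have key : ∀ g ∈ G, balancedRisk ρ' ρπl ℓ g
      = t * balancedRisk ρE ρN ℓ g + (1 - t) * (c / 2) := by
    intro g hg
    obtain ⟨h1, h2, h3, h4⟩ := hInt g hg
    have hEflip : ∫ x, ℓ (-g x) ∂ρE = c - ∫ x, ℓ (g x) ∂ρE :=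
      flip_integral ρE ℓ c hsym g h1
    have hNflip : ∫ x, ℓ (-g x) ∂ρN = c - ∫ x, ℓ (g x) ∂ρN :=
      flip_integral ρN ℓ c hsym g h2
    have hπint : Integrable (fun x => ℓ (-g x)) ρπ := by
      rw [hρπ]
      exact (h3.smul_measure ofReal_ne_top).add_measure (h4.smul_measure ofReal_ne_top)
    have e1 : ∫ x, ℓ (g x) ∂ρ' = α * ∫ x, ℓ (g x) ∂ρE + (1 - α) * ∫ x, ℓ (g x) ∂ρN := by
      rw [hρ']; exact combo_integral _ _ _ _ hα0 (by linarith) _ h1 h2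
    have e2 : ∫ x, ℓ (-g x) ∂ρπ
        = κ * ∫ x, ℓ (-g x) ∂ρE + (1 - κ) * ∫ x, ℓ (-g x) ∂ρN := by
      rw [hρπ]; exact combo_integral _ _ _ _ hκ0 (by linarith) _ h3 h4
    have e3 : ∫ x, ℓ (-g x) ∂ρπl
        = lam * ∫ x, ℓ (-g x) ∂ρN + (1 - lam) * ∫ x, ℓ (-g x) ∂ρπ := by
      rw [hρπl]; exact combo_integral _ _ _ _ hl0 (by linarith) _ h4 hπint
    simp only [balancedRisk, e1, e3, e2, hEflip, hNflip, ht]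
    ring
  rw [key gstar hgstar]
  constructor <;> intro h g hg <;> have hgk := key g hg <;> have := h g hg
  · rw [hgk] at this
    nlinarith
  · rw [hgk]
    nlinarith
end
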